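/- Let S be a UPB in H with the local independence property, Π the projector onto span S, ε = min over fully product unit vectors of ⟨·|Π|·⟩, and W = (Π − ε·1)/(|S| − ε·dim H). Then ε > 0, tr(W) = 1, W is positive on product states, and the value of the associated Bell expression on the correlations P(a|x) = tr(W ⊗_i M^{a_i}_{x_i}) (measurements along the local subsets S^{(i)}_k) equals |S|(1−ε)/(|S| − ε·dim H) > 1; hence the Bell inequality constructed from any UPB with the local independence property is violated by some no-signaling correlations. -/

import Mathlib

open Matrix

/-- Tensor product over the `N` parties of local vectors. -/
def vtens {N : ℕ} {d : Fin N → ℕ} (v : (i : Fin N) → Fin (d i) → ℂ) :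
    ((i : Fin N) → Fin (d i)) → ℂ :=
  fun u => ∏ i, v i (u i)

/-- Tensor product over the `N` parties of local matrices. -/
def tensProd {N : ℕ} {d : Fin N → ℕ}
    (M : (i : Fin N) → Matrix (Fin (d i)) (Fin (d i)) ℂ) :
    Matrix ((i : Fin N) → Fin (d i)) ((i : Fin N) → Fin (d i)) ℂ :=
  Matrix.of fun u v => ∏ i, M i (u i) (v i)

/-- Rank-one projector `|ψ⟩⟨ψ|`. -/
def outer {N : ℕ} {d : Fin N → ℕ} (ψ : ((i : Fin N) → Fin (d i)) → ℂ) :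
    Matrix ((i : Fin N) → Fin (d i)) ((i : Fin N) → Fin (d i)) ℂ :=
  Matrix.of fun u w => ψ u * star (ψ w)

/-- Rank-one local projector `|v⟩⟨v|`. -/
def proj {n : ℕ} (v : Fin n → ℂ) : Matrix (Fin n) (Fin n) ℂ :=
  Matrix.of fun i j => v i * star (v j)

/-- A no-signaling box with inputs `x i : Fin (K i)` and outputs
`a i : Fin (d i)`. -/
def NoSignaling {N : ℕ} {K d : Fin N → ℕ}
    (P : ((i : Fin N) → Fin (K i)) → ((i : Fin N) → Fin (d i)) → ℝ) : Prop :=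
  ∀ (j : Fin N) (x x' : (i : Fin N) → Fin (K i)), (∀ i, i ≠ j → x i = x' i) →
    ∀ a : (i : Fin N) → Fin (d i),
      ∑ b : Fin (d j), P x (Function.update a j b)
        = ∑ b : Fin (d j), P x' (Function.update a j b)

/-!
For a unit vector `v`, `⟨v|Π|v⟩ = ∑ₘ |⟨Ψₘ|v⟩|²`, so `ε > 0` is the UPB property, and positivity
of `W` on product states is the definition of `ε`. The key inequality `ε · dim H < |S|` comes from
computing `tr Π = |S|` in an orthonormal product basis `⨂ᵢ B i (x m i) bᵢ` containing an element
`Ψ m` of the UPB: all diagonal entries are `≥ ε` and the one at `Ψ m` is `1`, so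
`|S| ≥ 1 + (dim H - 1) ε`; with `|S| < dim H` this forces `ε < 1`, hence `ε · dim H < |S|`.
The correlations `tr(W ⨂ᵢ Mᵢ)` are normalised and no-signaling because the measurement
projectors of each party sum to the identity.
-/

theorem mul_card_lt_sum_of_le {ι : Type*} [Fintype ι] {f : ι → ℝ} {ε : ℝ}
    (hle : ∀ i, ε ≤ f i) (i₀ : ι) (h₀ : f i₀ = 1) (hlt : ∑ i, f i < Fintype.card ι) :
    ε * Fintype.card ι < ∑ i, f i := by
  classical
  have hcard : (1 : ℝ) ≤ Fintype.card ι := by exact_mod_cast Fintype.card_pos_iff.2 ⟨i₀⟩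
  have hsum : 1 + (Fintype.card ι - 1) * ε ≤ ∑ i, f i := by
    rw [← Finset.add_sum_erase _ _ (Finset.mem_univ i₀), h₀]
    have := Finset.card_nsmul_le_sum (Finset.univ.erase i₀) f ε fun i _ => hle i
    rw [Finset.card_erase_of_mem (Finset.mem_univ i₀), Finset.card_univ, nsmul_eq_mul,
      Nat.cast_sub (by exact_mod_cast hcard)] at this
    push_cast at this
    linarith
  rcases lt_or_ge ε 1 with hε | hε
  · linarith
  · nlinarith

theorem one_lt_mul_one_sub_div {s ε D : ℝ} (hε : 0 < ε) (hεD : ε * D < s) (hsD : s < D) :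
    1 < s * (1 - ε) / (s - ε * D) := by
  rw [one_lt_div (sub_pos.2 hεD)]
  nlinarith [mul_pos hε (sub_pos.2 hsD)]

section

variable {N : ℕ} {d : Fin N → ℕ}

theorem dotProduct_vtens (φ φ' : (i : Fin N) → Fin (d i) → ℂ) :
    star (vtens φ) ⬝ᵥ vtens φ' = ∏ i, star (φ i) ⬝ᵥ φ' i := by
  simp only [dotProduct, vtens, Pi.star_apply, star_prod, ← Finset.prod_mul_distrib,
    Fintype.prod_sum]

theorem tensProd_proj (φ : (i : Fin N) → Fin (d i) → ℂ) :
    tensProd (fun i => proj (φ i)) = outer (vtens φ) := by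
  ext u w
  simp [tensProd, proj, outer, vtens, star_prod, Finset.prod_mul_distrib]

theorem tensProd_one : tensProd (fun i => (1 : Matrix (Fin (d i)) (Fin (d i)) ℂ)) = 1 := by
  ext u w
  simp [tensProd, one_apply, Fintype.prod_boole, funext_iff]

theorem sum_tensProd (M : (i : Fin N) → Fin (d i) → Matrix (Fin (d i)) (Fin (d i)) ℂ) :
    ∑ a : (i : Fin N) → Fin (d i), tensProd (fun i => M i (a i)) =
      tensProd (fun i => ∑ b, M i b) := by
  ext u w
  simp only [tensProd, Matrix.sum_apply, of_apply, Fintype.prod_sum]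

theorem sum_tensProd_update (M : (i : Fin N) → Matrix (Fin (d i)) (Fin (d i)) ℂ) (j : Fin N)
    (f : Fin (d j) → Matrix (Fin (d j)) (Fin (d j)) ℂ) :
    ∑ b, tensProd (Function.update M j (f b)) = tensProd (Function.update M j (∑ b, f b)) := by
  ext u w
  simp only [tensProd, Matrix.sum_apply, of_apply,
    Function.apply_update (fun i (A : Matrix (Fin (d i)) (Fin (d i)) ℂ) => A (u i) (w i)),
    Finset.prod_update_of_mem (Finset.mem_univ j), Finset.sum_mul]

theorem sum_proj_eq_one {n : ℕ} (B : Fin n → Fin n → ℂ)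
    (hB : ∀ b b', star (B b) ⬝ᵥ B b' = if b = b' then 1 else 0) :
    ∑ b, proj (B b) = 1 := by
  set U : Matrix (Fin n) (Fin n) ℂ := of fun c b => B b c
  have hU : Uᴴ * U = 1 := by
    ext b b'
    simpa [U, mul_apply, one_apply, dotProduct] using hB b b'
  calc ∑ b, proj (B b) = U * Uᴴ := by ext u w; simp [U, proj, mul_apply, Matrix.sum_apply]
    _ = 1 := mul_eq_one_comm.mp hU

theorem sum_tensProd_proj_eq_one (B : (i : Fin N) → Fin (d i) → Fin (d i) → ℂ)
    (hB : ∀ i b b', star (B i b) ⬝ᵥ B i b' = if b = b' then 1 else 0) :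
    ∑ a : (i : Fin N) → Fin (d i), tensProd (fun i => proj (B i (a i))) = 1 := by
  rw [sum_tensProd (fun i b => proj (B i b)), ← tensProd_one]
  exact congrArg tensProd (funext fun i => sum_proj_eq_one (B i) (hB i))

theorem trace_mul_outer (A : Matrix ((i : Fin N) → Fin (d i)) ((i : Fin N) → Fin (d i)) ℂ)
    (ψ : ((i : Fin N) → Fin (d i)) → ℂ) :
    (A * outer ψ).trace = star ψ ⬝ᵥ A *ᵥ ψ := by
  simp only [trace, mul_apply, outer, of_apply, diag_apply, dotProduct, mulVec, Pi.star_apply,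
    Finset.mul_sum]
  refine Finset.sum_congr rfl fun u _ => Finset.sum_congr rfl fun w _ => ?_
  ring

theorem trace_outer (ψ : ((i : Fin N) → Fin (d i)) → ℂ) :
    (outer ψ).trace = star ψ ⬝ᵥ ψ := by
  simp only [trace, outer, diag_apply, of_apply, dotProduct, Pi.star_apply, mul_comm]

theorem dotProduct_outer_mulVec (ψ v : ((i : Fin N) → Fin (d i)) → ℂ) :
    star v ⬝ᵥ outer ψ *ᵥ v = Complex.normSq (star ψ ⬝ᵥ v) := by
  rw [Complex.normSq_eq_conj_mul_self, ← Complex.star_def, ← star_dotProduct]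
  simp only [dotProduct, mulVec, outer, of_apply, Pi.star_apply, Finset.sum_mul, Finset.mul_sum]
  rw [Finset.sum_comm]
  refine Finset.sum_congr rfl fun u _ => Finset.sum_congr rfl fun w _ => ?_
  ring

theorem star_vtens_dotProduct_self {φ : (i : Fin N) → Fin (d i) → ℂ}
    (hφ : ∀ i, star (φ i) ⬝ᵥ φ i = 1) : star (vtens φ) ⬝ᵥ vtens φ = 1 := by
  simp [dotProduct_vtens, hφ]

theorem star_vtens_dotProduct_vtens {s : ℕ} {φ : Fin s → (i : Fin N) → Fin (d i) → ℂ}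
    (hφ : ∀ m i, star (φ m i) ⬝ᵥ φ m i = 1)
    (horth : ∀ m n, m ≠ n → star (vtens (φ m)) ⬝ᵥ vtens (φ n) = 0) (m n : Fin s) :
    star (vtens (φ m)) ⬝ᵥ vtens (φ n) = if m = n then 1 else 0 := by
  split_ifs with h
  · exact h ▸ star_vtens_dotProduct_self (hφ m)
  · exact horth m n h

theorem sum_dotProduct_vtens_mulVec (B : (i : Fin N) → Fin (d i) → Fin (d i) → ℂ)
    (hB : ∀ i b b', star (B i b) ⬝ᵥ B i b' = if b = b' then 1 else 0)
    (A : Matrix ((i : Fin N) → Fin (d i)) ((i : Fin N) → Fin (d i)) ℂ) :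
    ∑ a : (i : Fin N) → Fin (d i), star (vtens fun i => B i (a i)) ⬝ᵥ
      A *ᵥ vtens (fun i => B i (a i)) = A.trace := by
  simp only [← trace_mul_outer, ← tensProd_proj, ← trace_sum, ← Matrix.mul_sum,
    sum_tensProd_proj_eq_one B hB, mul_one]

theorem mul_prod_lt_of_le_re_dotProduct
    {A : Matrix ((i : Fin N) → Fin (d i)) ((i : Fin N) → Fin (d i)) ℂ} {s : ℕ} {ε : ℝ}
    (htr : A.trace = s) (hs : s < ∏ i, d i)
    (hle : ∀ φ : (i : Fin N) → Fin (d i) → ℂ, (∀ i, star (φ i) ⬝ᵥ φ i = 1) →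
      ε ≤ (star (vtens φ) ⬝ᵥ A *ᵥ vtens φ).re)
    (B : (i : Fin N) → Fin (d i) → Fin (d i) → ℂ)
    (hB : ∀ i b b', star (B i b) ⬝ᵥ B i b' = if b = b' then 1 else 0)
    (a₀ : (i : Fin N) → Fin (d i))
    (h₀ : star (vtens fun i => B i (a₀ i)) ⬝ᵥ A *ᵥ vtens (fun i => B i (a₀ i)) = 1) :
    ε * ∏ i, (d i : ℝ) < s := by
  have hsum : ∑ a : (i : Fin N) → Fin (d i),
      (star (vtens fun i => B i (a i)) ⬝ᵥ A *ᵥ vtens (fun i => B i (a i))).re = s := by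
    rw [← Complex.re_sum, sum_dotProduct_vtens_mulVec B hB, htr, Complex.natCast_re]
  have hcard : (Fintype.card ((i : Fin N) → Fin (d i)) : ℝ) = ∏ i, (d i : ℝ) := by simp
  rw [← hcard, ← hsum]
  refine mul_card_lt_sum_of_le (fun a => hle _ fun i => ?_) a₀ (by rw [h₀, Complex.one_re]) ?_
  · simp [hB]
  · rw [hsum, hcard]
    exact_mod_cast hs

section Projector

variable {s : ℕ} (Ψ : Fin s → ((i : Fin N) → Fin (d i)) → ℂ)

theorem dotProduct_sum_outer_mulVec (v : ((i : Fin N) → Fin (d i)) → ℂ) :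
    star v ⬝ᵥ (∑ m, outer (Ψ m)) *ᵥ v = ((∑ m, Complex.normSq (star (Ψ m) ⬝ᵥ v) : ℝ) : ℂ) := by
  simp only [Matrix.sum_mulVec, dotProduct_sum, dotProduct_outer_mulVec, Complex.ofReal_sum]

theorem re_dotProduct_sum_outer_mulVec_pos {v : ((i : Fin N) → Fin (d i)) → ℂ} {m : Fin s}
    (hm : star (Ψ m) ⬝ᵥ v ≠ 0) : 0 < (star v ⬝ᵥ (∑ m, outer (Ψ m)) *ᵥ v).re := by
  rw [dotProduct_sum_outer_mulVec, Complex.ofReal_re]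
  exact lt_of_lt_of_le (Complex.normSq_pos.2 hm)
    (Finset.single_le_sum (f := fun m => Complex.normSq (star (Ψ m) ⬝ᵥ v))
      (fun m _ => Complex.normSq_nonneg _) (Finset.mem_univ m))

variable {Ψ} (hΨ : ∀ m n, star (Ψ m) ⬝ᵥ Ψ n = if m = n then 1 else 0)
include hΨ

theorem trace_sum_outer : (∑ m, outer (Ψ m)).trace = s := by
  simp [trace_sum, trace_outer, hΨ]

theorem dotProduct_sum_outer_mulVec_self (n : Fin s) :
    star (Ψ n) ⬝ᵥ (∑ m, outer (Ψ m)) *ᵥ Ψ n = 1 := by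
  simp [dotProduct_sum_outer_mulVec, hΨ]

end Projector

def productValues (A : Matrix ((i : Fin N) → Fin (d i)) ((i : Fin N) → Fin (d i)) ℂ) : Set ℝ :=
  {r | ∃ φ : (i : Fin N) → Fin (d i) → ℂ,
    (∀ i, star (φ i) ⬝ᵥ φ i = 1) ∧ (r : ℂ) = star (vtens φ) ⬝ᵥ A *ᵥ vtens φ}

section ProductMinimum

variable {s : ℕ} {Ψ : Fin s → ((i : Fin N) → Fin (d i)) → ℂ} {ε : ℝ}
  (hε : IsLeast (productValues (∑ m, outer (Ψ m))) ε)
include hε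

theorem le_re_dotProduct_of_isLeast_productValues {φ : (i : Fin N) → Fin (d i) → ℂ}
    (hφ : ∀ i, star (φ i) ⬝ᵥ φ i = 1) :
    ε ≤ (star (vtens φ) ⬝ᵥ (∑ m, outer (Ψ m)) *ᵥ vtens φ).re :=
  hε.2 ⟨φ, hφ, by rw [dotProduct_sum_outer_mulVec, Complex.ofReal_re]⟩

theorem pos_of_isLeast_productValues
    (hupb : ∀ φ : (i : Fin N) → Fin (d i) → ℂ, (∀ i, star (φ i) ⬝ᵥ φ i = 1) →
      ∃ m, star (Ψ m) ⬝ᵥ vtens φ ≠ 0) :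
    0 < ε := by
  obtain ⟨φ, hφ, hεφ⟩ := hε.1
  obtain ⟨m, hm⟩ := hupb φ hφ
  have := re_dotProduct_sum_outer_mulVec_pos Ψ hm
  rwa [← hεφ, Complex.ofReal_re] at this

end ProductMinimum

section Witness

variable {ι : Type*} [Fintype ι] [DecidableEq ι] {ε : ℝ} {A : Matrix ι ι ℂ}

theorem trace_inv_smul_sub_smul_one_eq_one {s D : ℝ} (hD : (Fintype.card ι : ℝ) = D)
    (htr : A.trace = s) (hδ : s - ε * D ≠ 0) :
    ((((s - ε * D : ℝ) : ℂ))⁻¹ • (A - ε • (1 : Matrix ι ι ℂ))).trace = 1 := by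
  rw [trace_smul, trace_sub, trace_smul, trace_one, htr, ← Complex.ofReal_natCast, hD,
    Complex.real_smul, ← Complex.ofReal_mul, ← Complex.ofReal_sub, smul_eq_mul,
    inv_mul_cancel₀ (Complex.ofReal_ne_zero.2 hδ)]

theorem re_dotProduct_inv_smul_sub_smul_one_mulVec (c : ℝ) {v : ι → ℂ} (hv : star v ⬝ᵥ v = 1) :
    (star v ⬝ᵥ (((c : ℂ))⁻¹ • (A - ε • (1 : Matrix ι ι ℂ))) *ᵥ v).re =
      ((star v ⬝ᵥ A *ᵥ v).re - ε) / c := by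
  rw [smul_mulVec, sub_mulVec, smul_mulVec, one_mulVec, dotProduct_smul, dotProduct_sub,
    dotProduct_smul, hv, smul_eq_mul, Complex.real_smul, mul_one, ← Complex.ofReal_inv,
    Complex.re_ofReal_mul, Complex.sub_re, Complex.ofReal_re, inv_mul_eq_div]

end Witness

def correlations {K : Fin N → ℕ} (B : (i : Fin N) → Fin (K i) → Fin (d i) → Fin (d i) → ℂ)
    (W : Matrix ((i : Fin N) → Fin (d i)) ((i : Fin N) → Fin (d i)) ℂ)
    (x : (i : Fin N) → Fin (K i)) (a : (i : Fin N) → Fin (d i)) : ℝ :=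
  ((W * tensProd fun i => proj (B i (x i) (a i))).trace).re

section Correlations

variable {K : Fin N → ℕ} (B : (i : Fin N) → Fin (K i) → Fin (d i) → Fin (d i) → ℂ)
  (W : Matrix ((i : Fin N) → Fin (d i)) ((i : Fin N) → Fin (d i)) ℂ)

theorem correlations_eq (x : (i : Fin N) → Fin (K i)) (a : (i : Fin N) → Fin (d i)) :
    correlations B W x a =
      (star (vtens fun i => B i (x i) (a i)) ⬝ᵥ W *ᵥ vtens (fun i => B i (x i) (a i))).re := by
  rw [correlations, tensProd_proj, trace_mul_outer]

theorem correlations_nonneg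
    (hW : ∀ φ : (i : Fin N) → Fin (d i) → ℂ, (∀ i, star (φ i) ⬝ᵥ φ i = 1) →
      0 ≤ (star (vtens φ) ⬝ᵥ W *ᵥ vtens φ).re)
    (hB : ∀ i t b, star (B i t b) ⬝ᵥ B i t b = 1)
    (x : (i : Fin N) → Fin (K i)) (a : (i : Fin N) → Fin (d i)) :
    0 ≤ correlations B W x a := by
  rw [correlations_eq]
  exact hW _ fun i => hB i (x i) (a i)

variable (hB : ∀ i t b b', star (B i t b) ⬝ᵥ B i t b' = if b = b' then 1 else 0)
include hB

theorem sum_correlations (x : (i : Fin N) → Fin (K i)) :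
    ∑ a, correlations B W x a = W.trace.re := by
  simp only [correlations, ← Complex.re_sum, ← trace_sum, ← Matrix.mul_sum,
    sum_tensProd_proj_eq_one _ fun i => hB i (x i), mul_one]

theorem noSignaling_correlations : NoSignaling (correlations B W) := by
  intro j x x' hx a
  have hsum : ∀ x : (i : Fin N) → Fin (K i), ∑ b, correlations B W x (Function.update a j b) =
      ((W * tensProd (Function.update (fun i => proj (B i (x i) (a i))) j 1)).trace).re := by
    intro x
    simp only [correlations, ← Complex.re_sum, ← trace_sum, ← Matrix.mul_sum,
      ← sum_proj_eq_one _ (hB j (x j)), ← sum_tensProd_update,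
      Function.apply_update (fun i c => proj (B i (x i) c))]
  rw [hsum, hsum]
  congr 4
  funext i
  rcases eq_or_ne i j with rfl | hi
  · simp
  · simp [Function.update_of_ne hi, hx i hi]

end Correlations

end

theorem upb_bell_inequality_ns_violation_general (N : ℕ) (K d : Fin N → ℕ) (s : ℕ)
    (B : (i : Fin N) → Fin (K i) → Fin (d i) → Fin (d i) → ℂ)
    (hON : ∀ i t a a', star (B i t a) ⬝ᵥ B i t a' = if a = a' then 1 else 0)
    (x : Fin s → (i : Fin N) → Fin (K i))
    (a : Fin s → (i : Fin N) → Fin (d i))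
    (horth : ∀ m n, m ≠ n →
      star (vtens fun i => B i (x m i) (a m i)) ⬝ᵥ
        vtens (fun i => B i (x n i) (a n i)) = 0)
    (hproper : s < ∏ i, d i)
    (hupb : ∀ φ : (i : Fin N) → Fin (d i) → ℂ,
      (∀ i, star (φ i) ⬝ᵥ φ i = 1) →
      ∃ m, star (vtens fun i => B i (x m i) (a m i)) ⬝ᵥ vtens φ ≠ 0)
    (Pr : Matrix ((i : Fin N) → Fin (d i)) ((i : Fin N) → Fin (d i)) ℂ)
    (hPr : Pr = ∑ m, outer (vtens fun i => B i (x m i) (a m i)))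
    (ε : ℝ)
    (hε : IsLeast {r : ℝ | ∃ φ : (i : Fin N) → Fin (d i) → ℂ,
      (∀ i, star (φ i) ⬝ᵥ φ i = 1) ∧
      (r : ℂ) = star (vtens φ) ⬝ᵥ Pr.mulVec (vtens φ)} ε)
    (W : Matrix ((i : Fin N) → Fin (d i)) ((i : Fin N) → Fin (d i)) ℂ)
    (hW : W = (((s : ℝ) - ε * ∏ i, (d i : ℝ) : ℝ) : ℂ)⁻¹ •
      (Pr - (ε : ℝ) • (1 : Matrix ((i : Fin N) → Fin (d i)) ((i : Fin N) → Fin (d i)) ℂ))) :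
    0 < ε ∧
    W.trace = 1 ∧
    (∀ φ : (i : Fin N) → Fin (d i) → ℂ, (∀ i, star (φ i) ⬝ᵥ φ i = 1) →
      0 ≤ (star (vtens φ) ⬝ᵥ W.mulVec (vtens φ)).re) ∧
    (∑ m, ((W * tensProd (fun i => proj (B i (x m i) (a m i)))).trace).re
      = s * (1 - ε) / ((s : ℝ) - ε * ∏ i, (d i : ℝ))) ∧
    1 < s * (1 - ε) / ((s : ℝ) - ε * ∏ i, (d i : ℝ)) ∧
    ∃ P : ((i : Fin N) → Fin (K i)) → ((i : Fin N) → Fin (d i)) → ℝ,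
      (∀ x' a', 0 ≤ P x' a') ∧
      (∀ x', ∑ a' : (i : Fin N) → Fin (d i), P x' a' = 1) ∧
      NoSignaling P ∧
      1 < ∑ m, P (x m) (a m) := by
  subst hPr
  have hunit : ∀ i t b, star (B i t b) ⬝ᵥ B i t b = 1 := fun i t b => by simp [hON]
  have hΨ := star_vtens_dotProduct_vtens (φ := fun m i => B i (x m i) (a m i))
    (fun m i => hunit _ _ _) horth
  have hlb := fun φ => le_re_dotProduct_of_isLeast_productValues hε (φ := φ)
  obtain ⟨φ₀, hφ₀, -⟩ := hε.1
  obtain ⟨m₀, -⟩ := hupb φ₀ hφ₀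
  have hεpos : 0 < ε := pos_of_isLeast_productValues hε hupb
  have hgap : ε * ∏ i, (d i : ℝ) < s :=
    mul_prod_lt_of_le_re_dotProduct (trace_sum_outer hΨ) hproper hlb
      (fun i => B i (x m₀ i)) (fun i => hON i _) (a m₀)
      (dotProduct_sum_outer_mulVec_self hΨ m₀)
  have hWre := fun v => hW ▸ re_dotProduct_inv_smul_sub_smul_one_mulVec (v := v) _
  have hpos : ∀ φ : (i : Fin N) → Fin (d i) → ℂ, (∀ i, star (φ i) ⬝ᵥ φ i = 1) →
      0 ≤ (star (vtens φ) ⬝ᵥ W *ᵥ vtens φ).re := fun φ hφ => by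
    rw [hWre _ (star_vtens_dotProduct_self hφ)]
    exact div_nonneg (sub_nonneg.2 (hlb φ hφ)) (sub_pos.2 hgap).le
  have hbell : ∑ m, correlations B W (x m) (a m) =
      s * (1 - ε) / (s - ε * ∏ i, (d i : ℝ)) := by
    simp only [correlations_eq, hΨ, ↓reduceIte, hWre, dotProduct_sum_outer_mulVec_self hΨ,
      Complex.one_re, Finset.sum_const, Finset.card_univ, Fintype.card_fin, nsmul_eq_mul]
    ring
  have htr : W.trace = 1 :=
    hW ▸ trace_inv_smul_sub_smul_one_eq_one (by simp)
      (by rw [trace_sum_outer hΨ, Complex.ofReal_natCast]) (sub_pos.2 hgap).ne'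
  have hgt := one_lt_mul_one_sub_div hεpos hgap (by exact_mod_cast hproper)
  refine ⟨hεpos, htr, hpos, hbell, hgt, correlations B W,
    correlations_nonneg B W hpos hunit, fun x' => ?_,
    noSignaling_correlations B W hON, hbell ▸ hgt⟩
  rw [sum_correlations B W hON, htr, Complex.one_re]

/-- From any UPB with the local independence property one gets a Bell
inequality with no quantum violation which is nevertheless violated by some
no-signaling correlations.  The UPB `S = {Ψ m}`, `Ψ m = ⨂ᵢ B i (x m i) (a m i)`
(with `B i t` the orthonormal local bases/settings, no two vectors of different
settings orthogonal), spans a proper subspace (`s < dim H`) and no fully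
product vector is orthogonal to all its elements.  With `Π` the projector onto
`span S`, `ε` the least value of `⟨·|Π|·⟩` over fully product unit vectors, and
`W = (Π − ε·𝟙)/(s − ε·dim H)`: `ε > 0`, `tr W = 1`, `W` is positive on product
states, the value of the Bell expression on the correlations
`P(a|x) = tr(W ⨂ᵢ |B i (x i) (a i)⟩⟨B i (x i) (a i)|)` equals
`s(1−ε)/(s − ε·dim H) > 1`, and hence some no-signaling box violates the Bell
inequality `∑ₘ P(a m|x m) ≤ 1`. -/
theorem upb_bell_inequality_ns_violation (N : ℕ) (K d : Fin N → ℕ) (s : ℕ)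
    (B : (i : Fin N) → Fin (K i) → Fin (d i) → Fin (d i) → ℂ)
    (hON : ∀ i t a a', star (B i t a) ⬝ᵥ B i t a' = if a = a' then 1 else 0)
    (hLIP : ∀ i t t' a a', t ≠ t' → star (B i t a) ⬝ᵥ B i t' a' ≠ 0)
    (x : Fin s → (i : Fin N) → Fin (K i))
    (a : Fin s → (i : Fin N) → Fin (d i))
    (horth : ∀ m n, m ≠ n →
      star (vtens fun i => B i (x m i) (a m i)) ⬝ᵥ
        vtens (fun i => B i (x n i) (a n i)) = 0)
    (hproper : s < ∏ i, d i)
    (hupb : ∀ φ : (i : Fin N) → Fin (d i) → ℂ,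
      (∀ i, star (φ i) ⬝ᵥ φ i = 1) →
      ∃ m, star (vtens fun i => B i (x m i) (a m i)) ⬝ᵥ vtens φ ≠ 0)
    (Pr : Matrix ((i : Fin N) → Fin (d i)) ((i : Fin N) → Fin (d i)) ℂ)
    (hPr : Pr = ∑ m, outer (vtens fun i => B i (x m i) (a m i)))
    (ε : ℝ)
    (hε : IsLeast {r : ℝ | ∃ φ : (i : Fin N) → Fin (d i) → ℂ,
      (∀ i, star (φ i) ⬝ᵥ φ i = 1) ∧
      (r : ℂ) = star (vtens φ) ⬝ᵥ Pr.mulVec (vtens φ)} ε)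
    (W : Matrix ((i : Fin N) → Fin (d i)) ((i : Fin N) → Fin (d i)) ℂ)
    (hW : W = (((s : ℝ) - ε * ∏ i, (d i : ℝ) : ℝ) : ℂ)⁻¹ •
      (Pr - (ε : ℝ) • (1 : Matrix ((i : Fin N) → Fin (d i)) ((i : Fin N) → Fin (d i)) ℂ))) :
    0 < ε ∧
    W.trace = 1 ∧
    (∀ φ : (i : Fin N) → Fin (d i) → ℂ, (∀ i, star (φ i) ⬝ᵥ φ i = 1) →
      0 ≤ (star (vtens φ) ⬝ᵥ W.mulVec (vtens φ)).re) ∧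
    (∑ m, ((W * tensProd (fun i => proj (B i (x m i) (a m i)))).trace).re
      = s * (1 - ε) / ((s : ℝ) - ε * ∏ i, (d i : ℝ))) ∧
    1 < s * (1 - ε) / ((s : ℝ) - ε * ∏ i, (d i : ℝ)) ∧
    ∃ P : ((i : Fin N) → Fin (K i)) → ((i : Fin N) → Fin (d i)) → ℝ,
      (∀ x' a', 0 ≤ P x' a') ∧
      (∀ x', ∑ a' : (i : Fin N) → Fin (d i), P x' a' = 1) ∧
      NoSignaling P ∧
      1 < ∑ m, P (x m) (a m) :=
  upb_bell_inequality_ns_violation_general N K d s B hON x a horth hproper hupb Pr hPr ε hε W hW
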